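/- Let μ, μ' : P → ℝ be two fully supported (strictly positive) finite measures on a finite set of state-action pairs P, and for each state s let μ(s) denote the sum of μ(s,a) over actions a available at s. Define the induced policies π(μ)(a|s) := μ(s,a)/μ(s) and similarly π(μ'). If ‖μ' − μ‖_∞ ≤ ε · min(μ) with ε < 1/(2|P|), then for every pair (s,a), |π(μ')(a|s) − π(μ)(a|s)| ≤ 4ε. -/
import Mathlib


/-- Two fully supported measures on a finite set of state-action pairs that are close in sup-norm
(relative to the minimum mass) induce close policies: if `‖μ' - μ‖_∞ ≤ ε · min μ` with
`ε < 1/(2|P|)`, then `|π(μ')(a|s) - π(μ)(a|s)| ≤ 4ε` for every pair `(s,a)`. -/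
theorem stmt_0 {S : Type*} [Fintype S] {A : S → Type*} [∀ s, Fintype (A s)]
    [Nonempty S] [∀ s, Nonempty (A s)]
    (_inst : Nonempty (Σ s : S, A s) := ⟨⟨Classical.arbitrary S, Classical.arbitrary _⟩⟩)
    (μ μ' : (Σ s : S, A s) → ℝ) (ε : ℝ)
    (hμ : ∀ p, 0 < μ p) (hμ' : ∀ p, 0 < μ' p)
    (hε : ε < 1 / (2 * Fintype.card (Σ s : S, A s)))
    (hclose : ∀ p, |μ' p - μ p| ≤ ε * Finset.univ.inf' Finset.univ_nonempty μ) :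
    ∀ (s : S) (a : A s),
      |μ' ⟨s, a⟩ / (∑ a', μ' ⟨s, a'⟩) - μ ⟨s, a⟩ / (∑ a', μ ⟨s, a'⟩)| ≤ 4 * ε := by
  intro s a
  set m := Finset.univ.inf' Finset.univ_nonempty μ with hm_def
  have hmle : ∀ p, m ≤ μ p := fun p => Finset.inf'_le _ (Finset.mem_univ p)
  have hm : 0 < m := by
    obtain ⟨p, _, hp⟩ := Finset.exists_mem_eq_inf' (Finset.univ_nonempty) μ
    rw [hm_def, hp]; exact hμ p
  have hε0 : 0 ≤ ε := by
    have h := hclose ⟨s, a⟩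
    nlinarith [abs_nonneg (μ' ⟨s, a⟩ - μ ⟨s, a⟩)]
  set N := Fintype.card (Σ s : S, A s) with hN_def
  set n := Fintype.card (A s) with hn_def
  have hn1 : 1 ≤ n := Fintype.card_pos
  have hnN : n ≤ N := Fintype.card_le_of_injective (fun a => (⟨s, a⟩ : Σ s, A s))
    (fun a b h => by simpa using h)
  set T := ∑ a', μ ⟨s, a'⟩ with hT_def
  set T' := ∑ a', μ' ⟨s, a'⟩ with hT'_def
  have hTn : (n : ℝ) * m ≤ T := by
    rw [hT_def]
    calc (n : ℝ) * m = ∑ _a' : A s, m := by rw [Finset.sum_const]; simp [hn_def, mul_comm]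
      _ ≤ _ := Finset.sum_le_sum fun i _ => hmle ⟨s, i⟩
  have hmT : m ≤ T := by
    have : (1 : ℝ) ≤ (n : ℝ) := by exact_mod_cast hn1
    nlinarith
  have hTpos : 0 < T := lt_of_lt_of_le hm hmT
  have hdiff : |T' - T| ≤ (n : ℝ) * (ε * m) := by
    rw [hT_def, hT'_def, ← Finset.sum_sub_distrib]
    calc |∑ a', (μ' ⟨s, a'⟩ - μ ⟨s, a'⟩)| ≤ ∑ a', |μ' ⟨s, a'⟩ - μ ⟨s, a'⟩| :=
          Finset.abs_sum_le_sum_abs _ _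
      _ ≤ ∑ _a' : A s, ε * m := Finset.sum_le_sum fun i _ => hclose ⟨s, i⟩
      _ = (n : ℝ) * (ε * m) := by rw [Finset.sum_const]; simp [hn_def]
  have hN0 : 0 < (N : ℝ) := by
    have : 0 < N := lt_of_lt_of_le hn1 hnN
    exact_mod_cast this
  have hNε : (N : ℝ) * ε < 1 / 2 := by
    have h := (lt_div_iff₀ (by positivity : (0:ℝ) < 2 * N)).mp hε
    nlinarith
  have hnεm : (n : ℝ) * (ε * m) < m / 2 := by
    have hnN' : (n : ℝ) ≤ (N : ℝ) := by exact_mod_cast hnN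
    nlinarith [mul_nonneg hε0 hm.le]
  have hT'half : T / 2 ≤ T' := by
    have := abs_le.mp hdiff
    linarith
  have hT'pos : 0 < T' := by linarith
  have hx : m ≤ μ ⟨s, a⟩ := hmle _
  have hxT : μ ⟨s, a⟩ ≤ T := Finset.single_le_sum (fun i _ => (hμ ⟨s, i⟩).le) (Finset.mem_univ a)
  have hxd : |μ' ⟨s, a⟩ - μ ⟨s, a⟩| ≤ ε * m := hclose _
  have hsplit : μ' ⟨s, a⟩ / T' - μ ⟨s, a⟩ / T
      = (μ' ⟨s, a⟩ - μ ⟨s, a⟩) / T' + μ ⟨s, a⟩ * (T - T') / (T * T') := by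
    field_simp
    ring
  rw [hsplit]
  have h1 : |(μ' ⟨s, a⟩ - μ ⟨s, a⟩) / T'| ≤ 2 * ε := by
    rw [abs_div, abs_of_pos hT'pos, div_le_iff₀ hT'pos]
    nlinarith
  have h2 : |μ ⟨s, a⟩ * (T - T') / (T * T')| ≤ 2 * ε := by
    rw [abs_div, abs_of_pos (mul_pos hTpos hT'pos), div_le_iff₀ (mul_pos hTpos hT'pos),
      abs_mul, abs_of_pos (hμ ⟨s, a⟩)]
    have habs : |T - T'| ≤ (n : ℝ) * (ε * m) := by rwa [abs_sub_comm]
    have hb : μ ⟨s, a⟩ * |T - T'| ≤ T * ((n : ℝ) * (ε * m)) :=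
      mul_le_mul hxT habs (abs_nonneg _) hTpos.le
    have hc : (n : ℝ) * m ≤ 2 * T' := by linarith
    nlinarith [mul_nonneg hε0 hTpos.le, mul_le_mul_of_nonneg_left hc (mul_nonneg hε0 hTpos.le)]
  calc |(μ' ⟨s, a⟩ - μ ⟨s, a⟩) / T' + μ ⟨s, a⟩ * (T - T') / (T * T')|
      ≤ |(μ' ⟨s, a⟩ - μ ⟨s, a⟩) / T'| + |μ ⟨s, a⟩ * (T - T') / (T * T')| := abs_add_le _ _
    _ ≤ 4 * ε := by linarith
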